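/- Let h : ℝ^d → ℂ be integrable, supported in a cube Q of sidelength 2^{-i} centered at c_Q, with ∫ h = 0. Let ψ be a Schwartz function and ψ_t(x) = t^{-d}ψ(x/t). Then for t = 2^{-(k+n₁)} with k + n₁ ≤ i, we have ‖ψ_t ∗ h‖_{L¹} ≤ C·2^{k+n₁−i}·‖h‖_{L¹}, where C depends only on d and ψ (via ‖∇ψ‖). -/

import Mathlib

/-!
Because `∫ h = 0`, one may subtract `ψ_t (x - c) h(y)` inside the convolution, so that
`ψ_t ∗ h (x) = ∫ (ψ_t (x - y) - ψ_t (x - c)) h(y) dy`. By the fundamental theorem of calculus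
along segments, translating `ψ` by `v` moves it by at most `‖v‖ ‖∇ψ‖_{L¹}` in `L¹`;
after rescaling, `‖ψ_t (· - y) - ψ_t (· - c)‖_{L¹} ≤ t⁻¹ ‖y - c‖ ‖∇ψ‖_{L¹}`, and
`‖y - c‖ ≤ √d 2^{-i} / 2` on the cube. Minkowski's integral inequality then gives the bound.
-/

open MeasureTheory Set Module
open scoped ENNReal

theorem integral_sub_const_mul_of_integral_eq_zero {α 𝕜 : Type*} [MeasurableSpace α]
    {μ : Measure α} [RCLike 𝕜] {g h : α → 𝕜} (hgh : Integrable (fun y ↦ g y * h y) μ)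
    (hh : Integrable h μ) (hh0 : ∫ y, h y ∂μ = 0) (b : 𝕜) :
    ∫ y, (g y - b) * h y ∂μ = ∫ y, g y * h y ∂μ := by
  simp_rw [sub_mul]
  rw [integral_sub hgh (hh.const_mul b), integral_const_mul, hh0, mul_zero, sub_zero]

theorem lintegral_enorm_integral_le_lintegral_lintegral_enorm {α β G : Type*}
    [MeasurableSpace α] [MeasurableSpace β] [NormedAddCommGroup G] [NormedSpace ℝ G]
    {μ : Measure α} {ν : Measure β} [SFinite μ] [SFinite ν] {F : α → β → G}
    (hF : AEStronglyMeasurable (Function.uncurry F) (μ.prod ν)) :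
    ∫⁻ x, ‖∫ y, F x y ∂ν‖ₑ ∂μ ≤ ∫⁻ y, ∫⁻ x, ‖F x y‖ₑ ∂μ ∂ν :=
  (lintegral_mono fun _ ↦ enorm_integral_le_lintegral_enorm _).trans_eq
    (lintegral_lintegral_swap hF.enorm)

section Dilation

variable {E F : Type*} [NormedAddCommGroup E] [NormedSpace ℝ E]
  [NormedAddCommGroup F] [NormedSpace ℝ F] {f : E → F}

theorem enorm_sub_le_lintegral_fderiv_mul (hf : ContDiff ℝ 1 f) (u v : E) :
    ‖f (u + v) - f u‖ₑ ≤ (∫⁻ t in Icc (0 : ℝ) 1, ‖fderiv ℝ f (u + t • v)‖ₑ) * ‖v‖ₑ := by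
  set g : ℝ → F := fun t ↦ f (u + t • v)
  have hg : ContDiff ℝ 1 g := hf.comp (contDiff_const.add (contDiff_id.smul contDiff_const))
  have hg' (t : ℝ) : deriv g t = fderiv ℝ f (u + t • v) v := by
    have := ((hf.differentiable one_ne_zero _).hasFDerivAt).comp_hasDerivAt t
      (((hasDerivAt_id t).smul_const v).const_add u)
    simpa [g, Function.comp_def] using this.deriv
  calc ‖f (u + v) - f u‖ₑ = ‖g 1 - g 0‖ₑ := by simp [g]
    _ ≤ ∫⁻ t in Icc (0 : ℝ) 1, ‖deriv g t‖ₑ :=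
      enorm_sub_le_lintegral_deriv_of_contDiffOn_Icc hg.contDiffOn zero_le_one
    _ ≤ ∫⁻ t in Icc (0 : ℝ) 1, ‖fderiv ℝ f (u + t • v)‖ₑ * ‖v‖ₑ :=
      lintegral_mono fun t ↦ hg' t ▸ ContinuousLinearMap.le_opENorm _ _
    _ = (∫⁻ t in Icc (0 : ℝ) 1, ‖fderiv ℝ f (u + t • v)‖ₑ) * ‖v‖ₑ :=
      lintegral_mul_const' _ _ enorm_ne_top

variable [MeasurableSpace E] [BorelSpace E] (μ : Measure E)

theorem lintegral_enorm_sub_add_le [SFinite μ] [μ.IsAddRightInvariant] (hf : ContDiff ℝ 1 f)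
    (v : E) : ∫⁻ u, ‖f (u + v) - f u‖ₑ ∂μ ≤ ‖v‖ₑ * ∫⁻ u, ‖fderiv ℝ f u‖ₑ ∂μ := by
  have hmeas : AEMeasurable (Function.uncurry fun u (t : ℝ) ↦ ‖fderiv ℝ f (u + t • v)‖ₑ)
      (μ.prod (volume.restrict (Icc 0 1))) :=
    ((hf.continuous_fderiv one_ne_zero).comp
      (continuous_fst.add (continuous_snd.smul continuous_const))).enorm.aemeasurable
  calc ∫⁻ u, ‖f (u + v) - f u‖ₑ ∂μ
      ≤ ∫⁻ u, (∫⁻ t in Icc (0 : ℝ) 1, ‖fderiv ℝ f (u + t • v)‖ₑ) * ‖v‖ₑ ∂μ :=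
        lintegral_mono fun u ↦ enorm_sub_le_lintegral_fderiv_mul hf u v
    _ = (∫⁻ t in Icc (0 : ℝ) 1, ∫⁻ u, ‖fderiv ℝ f (u + t • v)‖ₑ ∂μ) * ‖v‖ₑ := by
        rw [lintegral_mul_const' _ _ enorm_ne_top, lintegral_lintegral_swap hmeas]
    _ = ‖v‖ₑ * ∫⁻ u, ‖fderiv ℝ f u‖ₑ ∂μ := by
        simp_rw [lintegral_add_right_eq_self (fun u ↦ ‖fderiv ℝ f u‖ₑ)]
        simp [mul_comm]

variable [FiniteDimensional ℝ E] [μ.IsAddHaarMeasure]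

theorem lintegral_comp_smul (g : E → ℝ≥0∞) {r : ℝ} (hr : r ≠ 0) :
    ∫⁻ x, g (r • x) ∂μ = ENNReal.ofReal |(r ^ finrank ℝ E)⁻¹| * ∫⁻ x, g x ∂μ := by
  rw [← smul_eq_mul, ← lintegral_smul_measure, ← Measure.map_addHaar_smul μ hr]
  exact (lintegral_map_equiv g (Homeomorph.smulOfNeZero r hr).toMeasurableEquiv).symm

theorem lintegral_enorm_dilate_sub_dilate_le (hf : ContDiff ℝ 1 f) {a : ℝ} (ha : 0 < a)
    (y c : E) :
    ∫⁻ x, ‖a ^ finrank ℝ E • (f (a • (x - y)) - f (a • (x - c)))‖ₑ ∂μ ≤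
      ‖a • (y - c)‖ₑ * ∫⁻ u, ‖fderiv ℝ f u‖ₑ ∂μ := by
  set w := a • (y - c)
  have hshift (x : E) : a • (x - c) = a • (x - y) + w := by
    rw [← smul_add, sub_add_sub_cancel]
  have hpoint (x : E) : ‖a ^ finrank ℝ E • (f (a • (x - y)) - f (a • (x - c)))‖ₑ =
      ENNReal.ofReal (a ^ finrank ℝ E) * ‖f (a • (x - y) + w) - f (a • (x - y))‖ₑ := by
    rw [enorm_smul, hshift, enorm_sub_rev, Real.enorm_of_nonneg (by positivity)]
  have hscale : ENNReal.ofReal (a ^ finrank ℝ E) * ENNReal.ofReal |(a ^ finrank ℝ E)⁻¹| = 1 := by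
    have : 0 < a ^ finrank ℝ E := by positivity
    rw [abs_of_pos (inv_pos.2 this), ← ENNReal.ofReal_mul this.le, mul_inv_cancel₀ this.ne',
      ENNReal.ofReal_one]
  calc ∫⁻ x, ‖a ^ finrank ℝ E • (f (a • (x - y)) - f (a • (x - c)))‖ₑ ∂μ
      = ENNReal.ofReal (a ^ finrank ℝ E) * ∫⁻ x, ‖f (a • (x - y) + w) - f (a • (x - y))‖ₑ ∂μ := by
        simp_rw [hpoint]
        exact lintegral_const_mul' _ _ ENNReal.ofReal_ne_top
    _ = ∫⁻ u, ‖f (u + w) - f u‖ₑ ∂μ := by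
        rw [lintegral_sub_right_eq_self (fun x ↦ ‖f (a • x + w) - f (a • x)‖ₑ) y,
          lintegral_comp_smul μ (fun u ↦ ‖f (u + w) - f u‖ₑ) ha.ne', ← mul_assoc, hscale, one_mul]
    _ ≤ ‖w‖ₑ * ∫⁻ u, ‖fderiv ℝ f u‖ₑ ∂μ := lintegral_enorm_sub_add_le μ hf w

theorem lintegral_enorm_dilate_conv_le (ψ : SchwartzMap E ℂ) {h : E → ℂ} (hh : Integrable h μ)
    (hh0 : ∫ y, h y ∂μ = 0) {c : E} {R : ℝ} (hR : ∀ y, h y ≠ 0 → ‖y - c‖ ≤ R) {a : ℝ}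
    (ha : 0 < a) :
    ∫⁻ x, ‖∫ y, a ^ finrank ℝ E • (ψ (a • (x - y)) * h y) ∂μ‖ₑ ∂μ ≤
      ENNReal.ofReal (a * R) * (∫⁻ u, ‖fderiv ℝ ψ u‖ₑ ∂μ) * ∫⁻ y, ‖h y‖ₑ ∂μ := by
  set n := finrank ℝ E
  set K : E → E → ℂ := fun x y ↦ ψ (a • (x - y)) - ψ (a • (x - c))
  have hψ : ContDiff ℝ 1 ψ := ψ.smooth 1
  have hcancel (x : E) :
      ∫ y, a ^ n • (ψ (a • (x - y)) * h y) ∂μ = ∫ y, a ^ n • (K x y * h y) ∂μ := by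
    rw [integral_smul, integral_smul, integral_sub_const_mul_of_integral_eq_zero _ hh hh0]
    exact hh.bdd_mul (c := SchwartzMap.seminorm ℝ 0 0 ψ)
      (ψ.continuous.comp ((continuous_const.sub continuous_id).const_smul a)).aestronglyMeasurable
      (.of_forall fun y ↦ ψ.norm_le_seminorm ℝ _)
  have hmeas : AEStronglyMeasurable (Function.uncurry fun x y ↦ a ^ n • (K x y * h y))
      (μ.prod μ) := by
    refine .const_smul (f := fun z : E × E ↦ K z.1 z.2 * h z.2) (.fun_mul ?_ hh.1.comp_snd) (a ^ n)
    exact ((ψ.continuous.comp ((continuous_fst.sub continuous_snd).const_smul a)).sub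
      (ψ.continuous.comp ((continuous_fst.sub continuous_const).const_smul a))).aestronglyMeasurable
  have hkernel (y : E) :
      (∫⁻ x, ‖a ^ n • K x y‖ₑ ∂μ) * ‖h y‖ₑ ≤
        ENNReal.ofReal (a * R) * (∫⁻ u, ‖fderiv ℝ ψ u‖ₑ ∂μ) * ‖h y‖ₑ := by
    by_cases hy : h y = 0
    · simp [hy]
    gcongr
    refine (lintegral_enorm_dilate_sub_dilate_le μ hψ ha y c).trans ?_
    gcongr
    rw [← ofReal_norm, norm_smul, Real.norm_of_nonneg ha.le]
    exact ENNReal.ofReal_le_ofReal (mul_le_mul_of_nonneg_left (hR y hy) ha.le)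
  calc ∫⁻ x, ‖∫ y, a ^ n • (ψ (a • (x - y)) * h y) ∂μ‖ₑ ∂μ
      = ∫⁻ x, ‖∫ y, a ^ n • (K x y * h y) ∂μ‖ₑ ∂μ := by simp_rw [hcancel]
    _ ≤ ∫⁻ y, ∫⁻ x, ‖a ^ n • (K x y * h y)‖ₑ ∂μ ∂μ :=
      lintegral_enorm_integral_le_lintegral_lintegral_enorm hmeas
    _ = ∫⁻ y, (∫⁻ x, ‖a ^ n • K x y‖ₑ ∂μ) * ‖h y‖ₑ ∂μ := by
      simp_rw [← smul_mul_assoc, enorm_mul]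
      exact lintegral_congr fun y ↦ lintegral_mul_const' _ _ enorm_ne_top
    _ ≤ ∫⁻ y, ENNReal.ofReal (a * R) * (∫⁻ u, ‖fderiv ℝ ψ u‖ₑ ∂μ) * ‖h y‖ₑ ∂μ :=
      lintegral_mono hkernel
    _ = ENNReal.ofReal (a * R) * (∫⁻ u, ‖fderiv ℝ ψ u‖ₑ ∂μ) * ∫⁻ y, ‖h y‖ₑ ∂μ :=
      lintegral_const_mul'' _ hh.1.enorm

theorem integral_norm_dilate_conv_le (ψ : SchwartzMap E ℂ) {h : E → ℂ} (hh : Integrable h μ)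
    (hh0 : ∫ y, h y ∂μ = 0) {c : E} {R : ℝ} (hR0 : 0 ≤ R) (hR : ∀ y, h y ≠ 0 → ‖y - c‖ ≤ R)
    {a : ℝ} (ha : 0 < a) :
    ∫ x, ‖∫ y, a ^ finrank ℝ E • (ψ (a • (x - y)) * h y) ∂μ‖ ∂μ ≤
      a * R * (∫ u, ‖fderiv ℝ ψ u‖ ∂μ) * ∫ y, ‖h y‖ ∂μ := by
  set n := finrank ℝ E
  have hconv : AEStronglyMeasurable (fun x ↦ ∫ y, a ^ n • (ψ (a • (x - y)) * h y) ∂μ) μ := by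
    refine AEStronglyMeasurable.integral_prod_right' (.const_smul
      (f := fun z : E × E ↦ ψ (a • (z.1 - z.2)) * h z.2) (.fun_mul ?_ hh.1.comp_snd) (a ^ n))
    exact (ψ.continuous.comp
      ((continuous_fst.sub continuous_snd).const_smul a)).aestronglyMeasurable
  have hψ' : Integrable (fderiv ℝ ψ) μ := by
    have := (SchwartzMap.fderivCLM ℝ E ℂ ψ).integrable (μ := μ)
    rwa [show ⇑(SchwartzMap.fderivCLM ℝ E ℂ ψ) = fderiv ℝ ψ from
      funext (SchwartzMap.fderivCLM_apply ℝ ψ)] at this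
  rw [integral_norm_eq_lintegral_enorm hconv, integral_norm_eq_lintegral_enorm hψ'.1,
    integral_norm_eq_lintegral_enorm hh.1, ← ENNReal.toReal_ofReal (mul_nonneg ha.le hR0),
    ← ENNReal.toReal_mul, ← ENNReal.toReal_mul]
  exact ENNReal.toReal_mono (by finiteness [hψ'.2.ne, hh.2.ne])
    (lintegral_enorm_dilate_conv_le μ ψ hh hh0 hR ha)

end Dilation

theorem EuclideanSpace.norm_le_sqrt_card_mul {ι : Type*} [Fintype ι] {x : EuclideanSpace ℝ ι}
    {r : ℝ} (hr : 0 ≤ r) (hx : ∀ j, |x j| ≤ r) : ‖x‖ ≤ √(Fintype.card ι) * r := by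
  rw [EuclideanSpace.norm_eq, ← Real.sqrt_sq hr, ← Real.sqrt_mul (Nat.cast_nonneg _)]
  refine Real.sqrt_le_sqrt ((Finset.sum_le_card_nsmul _ _ (r ^ 2) fun j _ ↦ ?_).trans_eq (by simp))
  rw [Real.norm_eq_abs, sq_abs]
  exact sq_le_sq' (neg_le_of_abs_le (hx j)) (le_of_abs_le (hx j))

theorem stmt5_general (d : ℕ) (ψ : SchwartzMap (EuclideanSpace ℝ (Fin d)) ℂ) :
    ∃ C : ℝ, 0 < C ∧ ∀ (i k : ℤ) (n₁ : ℕ), k + (n₁ : ℤ) ≤ i →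
      ∀ (h : EuclideanSpace ℝ (Fin d) → ℂ) (c : EuclideanSpace ℝ (Fin d)),
        Integrable h →
        (Function.support h ⊆ {y | ∀ j, |y j - c j| ≤ (2:ℝ) ^ (-i) / 2}) →
        (∫ y, h y) = 0 →
        (∫ x, ‖∫ y, ((2:ℝ) ^ ((k + (n₁ : ℤ)) * d) : ℝ) •
            (ψ ((2:ℝ) ^ (k + (n₁ : ℤ)) • (x - y)) * h y)‖) ≤
          C * (2:ℝ) ^ (k + (n₁ : ℤ) - i) * ∫ y, ‖h y‖ := by
  set I := ∫ u, ‖fderiv ℝ ψ u‖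
  have hI : 0 ≤ I := integral_nonneg fun _ ↦ norm_nonneg _
  refine ⟨√d / 2 * I + 1, by positivity, fun i k n₁ _ h c hh hsupp hh0 ↦ ?_⟩
  set s : ℤ := k + n₁
  have hR (y) (hy : h y ≠ 0) : ‖y - c‖ ≤ √d * ((2:ℝ) ^ (-i) / 2) := by
    simpa using EuclideanSpace.norm_le_sqrt_card_mul (x := y - c) (by positivity) (hsupp hy)
  have hdil : (2:ℝ) ^ (s * d) = ((2:ℝ) ^ s) ^ finrank ℝ (EuclideanSpace ℝ (Fin d)) := by
    rw [finrank_euclideanSpace_fin, zpow_mul, zpow_natCast]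
  rw [hdil]
  calc _ ≤ (2:ℝ) ^ s * (√d * ((2:ℝ) ^ (-i) / 2)) * I * ∫ y, ‖h y‖ :=
        integral_norm_dilate_conv_le volume ψ hh hh0 (by positivity) hR (by positivity)
    _ = √d / 2 * I * (2:ℝ) ^ (s - i) * ∫ y, ‖h y‖ := by
        rw [sub_eq_add_neg, zpow_add₀ two_ne_zero s (-i)]; ring
    _ ≤ (√d / 2 * I + 1) * (2:ℝ) ^ (s - i) * ∫ y, ‖h y‖ := by
        gcongr
        linarith

/-- If `h` is integrable, supported in a cube of sidelength `2^{-i}` centered at `c`, with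
`∫ h = 0`, and `ψ` is Schwartz, then for `t = 2^{-(k+n₁)}` with `k+n₁ ≤ i` one has
`‖ψ_t ∗ h‖_{L¹} ≤ C 2^{k+n₁−i} ‖h‖_{L¹}`, with `C` depending only on `d` and `ψ`. -/
theorem stmt5 (d : ℕ) (hd : 1 ≤ d) (ψ : SchwartzMap (EuclideanSpace ℝ (Fin d)) ℂ) :
    ∃ C : ℝ, 0 < C ∧ ∀ (i k : ℤ) (n₁ : ℕ), k + (n₁ : ℤ) ≤ i →
      ∀ (h : EuclideanSpace ℝ (Fin d) → ℂ) (c : EuclideanSpace ℝ (Fin d)),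
        Integrable h →
        (Function.support h ⊆ {y | ∀ j, |y j - c j| ≤ (2:ℝ) ^ (-i) / 2}) →
        (∫ y, h y) = 0 →
        (∫ x, ‖∫ y, ((2:ℝ) ^ ((k + (n₁ : ℤ)) * d) : ℝ) •
            (ψ ((2:ℝ) ^ (k + (n₁ : ℤ)) • (x - y)) * h y)‖) ≤
          C * (2:ℝ) ^ (k + (n₁ : ℤ) - i) * ∫ y, ‖h y‖ :=
  stmt5_general d ψ
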